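/- Assume there exists a sequence (w_k)_{k∈ℕ} in the open upper half-plane ℂ⁺ with liminf_{k→∞} Im w_k = 0 and sup_k |Θ(w_k)| < 1. Then there exists an infinite-dimensional linear subspace M of H which is closed in (H, ‖·‖_H) and satisfies M ⊆ R_m(H); consequently there is C > 0 with ‖F‖_m ≤ C·‖F‖_H for all F ∈ M, i.e. the norms ‖·‖_m and ‖·‖_H are equivalent on M. -/

import Mathlib

open Complex Filter Topology

open scoped InnerProductSpace

noncomputable section

/-- The set `R_m(H)`. -/
def RmSet {H : Type*} [NormedAddCommGroup H] [InnerProductSpace ℂ H]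
    (ev : H →ₗ[ℂ] (ℂ → ℂ)) (D : Set ℂ) (m : ℂ → ℝ) : Set H :=
  {F | ∃ C : ℝ, 0 ≤ C ∧ ∀ z ∈ D,
      ‖ev F z‖ ≤ C * m z ∧
      ‖(starRingEnd ℂ) (ev F ((starRingEnd ℂ) z))‖ ≤ C * m z}

/-- The norm `‖F‖_m`. -/
def mnorm {H : Type*} [NormedAddCommGroup H] [InnerProductSpace ℂ H]
    (ev : H →ₗ[ℂ] (ℂ → ℂ)) (D : Set ℂ) (m : ℂ → ℝ) (F : H) : ℝ :=
  max ‖F‖ (sInf {C : ℝ | 0 ≤ C ∧ ∀ z ∈ D,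
      ‖ev F z‖ ≤ C * m z ∧
      ‖(starRingEnd ℂ) (ev F ((starRingEnd ℂ) z))‖ ≤ C * m z})

/-!
Choose points `z k` of the sequence whose imaginary parts decrease so fast that the normalized
reproducing kernels `e k = K_{z k} / ‖K_{z k}‖` are almost orthogonal: as `|Θ (z k)| ≤ δ < 1`,
`‖K_{z k}‖² ≥ (1 - δ²) |E (z k)|² / (4π Im z k)`, whereas the kernel formula bounds
`|⟨K_{z j}, K_{z k}⟩|` by `|E (z j)| |E (z k)| / (π (Im z j + Im z k))`. So `(e k)` is a Riesz
sequence and the closure `M` of its span is infinite-dimensional. At the points `±iy`, `y ≥ 1`,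
the same formula gives `|e k (±iy)|² ≲ Im (z k) · m(iy)²`; since `∑ Im (z k) < 1`, Cauchy–Schwarz
and the Riesz bound give `|F (±iy)| ≲ ‖F‖ m(iy)` on the span, and this closed condition passes to
`M`.
-/

open ComplexConjugate

theorem exists_seq_lt_mul {f : ℕ → ℝ} (hf : ∀ k, 0 < f k) (h : ∀ ε > 0, ∃ k, f k < ε)
    {c : ℝ} (hc : 0 < c) {ρ : ℕ → ℝ} (hρ : ∀ k, 0 < ρ k) :
    ∃ φ : ℕ → ℕ, f (φ 0) < c ∧ ∀ k, f (φ (k + 1)) < ρ k * f (φ k) := by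
  choose g hg using fun k j => h (ρ k * f j) (mul_pos (hρ k) (hf j))
  obtain ⟨j₀, hj₀⟩ := h c hc
  exact ⟨fun n => Nat.rec j₀ g n, hj₀, fun k => hg k _⟩

theorem sum_pow_le_of_lt_one {r : ℝ} (h₀ : 0 ≤ r) (h₁ : r < 1) (s : Finset ℕ) :
    ∑ k ∈ s, r ^ k ≤ (1 - r)⁻¹ := by
  rw [← tsum_geometric_of_lt_one h₀ h₁]
  exact (summable_geometric_of_lt_one h₀ h₁).sum_le_tsum s fun k _ => pow_nonneg h₀ k

theorem mul_div_sq_le {s t X N : ℝ} (hs : 0 ≤ s) (h : t * X ^ 2 ≤ s * N ^ 2) :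
    t * (X / N) ^ 2 ≤ s := by
  rcases eq_or_ne N 0 with rfl | hN
  · simpa using hs
  · rwa [div_pow, mul_div_assoc', div_le_iff₀ (by positivity)]

section Sparse

variable {a : ℕ → ℝ} {η : ℝ}

theorem le_half_mul_of_lt_mul (ha : ∀ k, 0 ≤ a k) (hη : η ^ 2 ≤ 1)
    (h : ∀ k, a (k + 1) < η ^ 2 * 2⁻¹ ^ (4 * k + 10) * a k) (k : ℕ) :
    a (k + 1) ≤ 2⁻¹ * a k := by
  refine (h k).le.trans (mul_le_mul_of_nonneg_right ?_ (ha k))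
  calc η ^ 2 * 2⁻¹ ^ (4 * k + 10) ≤ 1 * 2⁻¹ ^ 1 :=
        mul_le_mul hη (pow_le_pow_of_le_one (by norm_num) (by norm_num) (by omega))
          (by positivity) zero_le_one
    _ = 2⁻¹ := by norm_num

theorem le_half_pow_mul_of_lt_mul (ha : ∀ k, 0 ≤ a k) (hη : η ^ 2 ≤ 1)
    (h : ∀ k, a (k + 1) < η ^ 2 * 2⁻¹ ^ (4 * k + 10) * a k) (k : ℕ) :
    a k ≤ 2⁻¹ ^ k * a 0 := by
  induction k with
  | zero => simp
  | succ k ih =>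
    calc a (k + 1) ≤ 2⁻¹ * a k := le_half_mul_of_lt_mul ha hη h k
      _ ≤ 2⁻¹ * (2⁻¹ ^ k * a 0) := by gcongr
      _ = 2⁻¹ ^ (k + 1) * a 0 := by ring

theorem mul_le_sq_mul_of_lt_mul (ha : ∀ k, 0 ≤ a k) (hη : η ^ 2 ≤ 1)
    (h : ∀ k, a (k + 1) < η ^ 2 * 2⁻¹ ^ (4 * k + 10) * a k) {j k : ℕ} (hjk : j < k) :
    16 * a k ≤ η ^ 2 * (2⁻¹ ^ (j + 1) * 2⁻¹ ^ (k + 1)) ^ 2 * a j := by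
  obtain ⟨n, rfl⟩ : ∃ n, k = n + 1 := ⟨k - 1, by omega⟩
  have hanti : a n ≤ a j :=
    antitone_nat_of_succ_le (fun k => (le_half_mul_of_lt_mul ha hη h k).trans
      (mul_le_of_le_one_left (ha k) (by norm_num))) (by omega : j ≤ n)
  have hpow : (16 : ℝ) * 2⁻¹ ^ (4 * n + 10) ≤ (2⁻¹ ^ (j + 1) * 2⁻¹ ^ (n + 1 + 1)) ^ 2 := by
    rw [← pow_add, ← pow_mul, show (16 : ℝ) = (2⁻¹ ^ 4)⁻¹ by norm_num,
      inv_mul_le_iff₀ (by positivity), ← pow_add]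
    exact pow_le_pow_of_le_one (by norm_num) (by norm_num) (by omega)
  calc 16 * a (n + 1) ≤ 16 * (η ^ 2 * 2⁻¹ ^ (4 * n + 10) * a n) := by linarith [h n]
    _ = η ^ 2 * (16 * 2⁻¹ ^ (4 * n + 10)) * a n := by ring
    _ ≤ η ^ 2 * (2⁻¹ ^ (j + 1) * 2⁻¹ ^ (n + 1 + 1)) ^ 2 * a j := by gcongr; exact ha n

end Sparse

section AlmostOrthogonal

variable {𝕜 E ι : Type*} [RCLike 𝕜] [NormedAddCommGroup E] [InnerProductSpace 𝕜 E]

theorem norm_sum_smul_sq_eq (s : Finset ι) (c : ι → 𝕜) (e : ι → E) :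
    ‖∑ k ∈ s, c k • e k‖ ^ 2 =
      ∑ j ∈ s, ∑ k ∈ s, RCLike.re (conj (c j) * c k * ⟪e j, e k⟫_𝕜) := by
  rw [← inner_self_eq_norm_sq (𝕜 := 𝕜), sum_inner, map_sum]
  refine Finset.sum_congr rfl fun j _ => ?_
  rw [inner_smul_left, inner_sum, Finset.mul_sum, map_sum]
  refine Finset.sum_congr rfl fun k _ => ?_
  rw [inner_smul_right, mul_assoc]

theorem mul_sum_norm_sq_le_norm_sum_smul_sq {e : ι → E} {ε : ι → ℝ} {S : ℝ}
    (he : ∀ k, ‖e k‖ = 1) (hG : ∀ j k, j ≠ k → ‖⟪e j, e k⟫_𝕜‖ ≤ ε j * ε k)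
    (hε : ∀ s : Finset ι, ∑ k ∈ s, ε k ^ 2 ≤ S) (s : Finset ι) (c : ι → 𝕜) :
    (1 - S) * ∑ k ∈ s, ‖c k‖ ^ 2 ≤ ‖∑ k ∈ s, c k • e k‖ ^ 2 := by
  classical
  have hterm : ∀ j k, (if j = k then ‖c j‖ ^ 2 else 0) - ‖c j‖ * ε j * (‖c k‖ * ε k) ≤
      RCLike.re (conj (c j) * c k * ⟪e j, e k⟫_𝕜) := by
    intro j k
    by_cases hjk : j = k
    · subst hjk
      rw [if_pos rfl, inner_self_eq_norm_sq_to_K, he, mul_comm (conj _), RCLike.mul_conj]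
      norm_num
      exact mul_self_nonneg _
    · rw [if_neg hjk, zero_sub, neg_le]
      calc -RCLike.re (conj (c j) * c k * ⟪e j, e k⟫_𝕜)
          ≤ ‖conj (c j) * c k * ⟪e j, e k⟫_𝕜‖ :=
            (neg_le_abs _).trans (RCLike.abs_re_le_norm _)
        _ ≤ ‖c j‖ * ‖c k‖ * (ε j * ε k) := by
            rw [norm_mul, norm_mul, RCLike.norm_conj]
            gcongr
            exact hG j k hjk
        _ = ‖c j‖ * ε j * (‖c k‖ * ε k) := by ring
  have hCS : (∑ k ∈ s, ‖c k‖ * ε k) ^ 2 ≤ (∑ k ∈ s, ‖c k‖ ^ 2) * S :=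
    (Finset.sum_mul_sq_le_sq_mul_sq s _ _).trans
      (mul_le_mul_of_nonneg_left (hε s) (Finset.sum_nonneg fun k _ => by positivity))
  calc (1 - S) * ∑ k ∈ s, ‖c k‖ ^ 2 ≤ ∑ k ∈ s, ‖c k‖ ^ 2 - (∑ k ∈ s, ‖c k‖ * ε k) ^ 2 := by
        linarith
    _ = ∑ j ∈ s, ∑ k ∈ s,
          ((if j = k then ‖c j‖ ^ 2 else 0) - ‖c j‖ * ε j * (‖c k‖ * ε k)) := by
        simp [Finset.sum_sub_distrib, sq, Finset.sum_mul_sum]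
    _ ≤ ‖∑ k ∈ s, c k • e k‖ ^ 2 := by
        rw [norm_sum_smul_sq_eq]
        exact Finset.sum_le_sum fun j _ => Finset.sum_le_sum fun k _ => hterm j k

theorem linearIndependent_of_mul_sum_norm_sq_le {e : ι → E} {A : ℝ} (hA : 0 < A)
    (he : ∀ (s : Finset ι) (c : ι → 𝕜), A * ∑ k ∈ s, ‖c k‖ ^ 2 ≤ ‖∑ k ∈ s, c k • e k‖ ^ 2) :
    LinearIndependent 𝕜 e := by
  rw [linearIndependent_iff']
  intro s c hc i hi
  have hsum : ∑ k ∈ s, ‖c k‖ ^ 2 = 0 := by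
    refine le_antisymm ?_ (Finset.sum_nonneg fun k _ => by positivity)
    have := he s c
    rw [hc, norm_zero] at this
    nlinarith
  simpa using (Finset.sum_eq_zero_iff_of_nonneg (fun k _ => by positivity)).1 hsum i hi

theorem not_finiteDimensional_of_linearIndependent [Infinite ι] {p : Submodule 𝕜 E}
    {e : ι → E} (he : LinearIndependent 𝕜 e) (hp : ∀ k, e k ∈ p) : ¬FiniteDimensional 𝕜 p :=
  fun _ => Module.Finite.not_linearIndependent_of_infinite (fun k => (⟨e k, hp k⟩ : p))
    (LinearIndependent.of_comp p.subtype he)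

theorem mul_norm_apply_sq_le_of_mem_topologicalClosure_span {e : ι → E} {A B : ℝ}
    (he : ∀ (s : Finset ι) (c : ι → 𝕜), A * ∑ k ∈ s, ‖c k‖ ^ 2 ≤ ‖∑ k ∈ s, c k • e k‖ ^ 2)
    (L : E →L[𝕜] 𝕜) (hL : ∀ s : Finset ι, ∑ k ∈ s, ‖L (e k)‖ ^ 2 ≤ B) {F : E}
    (hF : F ∈ (Submodule.span 𝕜 (Set.range e)).topologicalClosure) :
    A * ‖L F‖ ^ 2 ≤ B * ‖F‖ ^ 2 := by
  have hclosed : IsClosed {F : E | A * ‖L F‖ ^ 2 ≤ B * ‖F‖ ^ 2} :=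
    isClosed_le (by fun_prop) (by fun_prop)
  rw [← SetLike.mem_coe, Submodule.topologicalClosure_coe] at hF
  refine closure_minimal (fun F hF => ?_) hclosed hF
  obtain ⟨c, rfl⟩ := Finsupp.mem_span_range_iff_exists_finsupp.1 hF
  show A * ‖L (∑ k ∈ c.support, c k • e k)‖ ^ 2 ≤ B * ‖∑ k ∈ c.support, c k • e k‖ ^ 2
  have hB : 0 ≤ B := by simpa using hL ∅
  have hLF : ‖L (∑ k ∈ c.support, c k • e k)‖ ^ 2 ≤ (∑ k ∈ c.support, ‖c k‖ ^ 2) * B :=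
    calc ‖L (∑ k ∈ c.support, c k • e k)‖ ^ 2
        ≤ (∑ k ∈ c.support, ‖c k‖ * ‖L (e k)‖) ^ 2 := by
          gcongr
          simp only [map_sum, map_smul, smul_eq_mul]
          exact (norm_sum_le _ _).trans_eq (Finset.sum_congr rfl fun k _ => norm_mul _ _)
      _ ≤ (∑ k ∈ c.support, ‖c k‖ ^ 2) * B :=
          (Finset.sum_mul_sq_le_sq_mul_sq _ _ _).trans
            (mul_le_mul_of_nonneg_left (hL _) (Finset.sum_nonneg fun k _ => by positivity))
  have := he c.support c
  rcases le_or_gt A 0 with hA | hA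
  · exact (mul_nonpos_of_nonpos_of_nonneg hA (sq_nonneg _)).trans (by positivity)
  · nlinarith

end AlmostOrthogonal

/-- `deBrangesKernel E w z` is `K_w(z)`, for `z ≠ conj w`. -/
def deBrangesKernel (E : ℂ → ℂ) (w z : ℂ) : ℂ :=
  (E z * conj (E w) - conj (E (conj z)) * E (conj w)) /
    (2 * (Real.pi : ℂ) * Complex.I * (conj w - z))

theorem norm_deBrangesKernel_le (E : ℂ → ℂ) {w z : ℂ} (h : w.im + z.im ≠ 0) :
    2 * Real.pi * |w.im + z.im| * ‖deBrangesKernel E w z‖ ≤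
      ‖E z‖ * ‖E w‖ + ‖E (conj z)‖ * ‖E (conj w)‖ := by
  have hdist : |w.im + z.im| ≤ ‖conj w - z‖ := by
    have := Complex.abs_im_le_norm (conj w - z)
    rwa [Complex.sub_im, Complex.conj_im, ← abs_neg, neg_sub, sub_neg_eq_add, add_comm] at this
  have hnum : ‖E z * conj (E w) - conj (E (conj z)) * E (conj w)‖ ≤
      ‖E z‖ * ‖E w‖ + ‖E (conj z)‖ * ‖E (conj w)‖ :=
    (norm_sub_le _ _).trans_eq (by rw [norm_mul, norm_mul, Complex.norm_conj, Complex.norm_conj])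
  have hpos : 0 < 2 * Real.pi * ‖conj w - z‖ := by
    have := (abs_pos.2 h).trans_le hdist
    positivity
  rw [deBrangesKernel, norm_div, norm_mul, norm_mul, norm_mul, Complex.norm_two, Complex.norm_I,
    Complex.norm_real, Real.norm_of_nonneg Real.pi_pos.le, mul_one, mul_div_assoc',
    div_le_iff₀ hpos]
  nlinarith [mul_le_mul hdist hnum (norm_nonneg _) (norm_nonneg _), Real.pi_pos]

theorem deBrangesKernel_self (E : ℂ → ℂ) (w : ℂ) :
    deBrangesKernel E w w = ((‖E w‖ ^ 2 - ‖E (conj w)‖ ^ 2) / (4 * Real.pi * w.im) : ℝ) := by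
  have hden : 2 * (Real.pi : ℂ) * Complex.I * (conj w - w) = ((4 * Real.pi * w.im : ℝ) : ℂ) := by
    rw [← neg_sub, Complex.sub_conj]
    push_cast
    ring_nf
    rw [Complex.I_sq]
    ring
  rw [deBrangesKernel, hden, mul_comm (conj (E (conj w))), Complex.mul_conj, Complex.mul_conj,
    Complex.normSq_eq_norm_sq, Complex.normSq_eq_norm_sq]
  push_cast
  rfl

structure IsDeBrangesKernel {H : Type*} [NormedAddCommGroup H] [InnerProductSpace ℂ H]
    (ev : H →ₗ[ℂ] (ℂ → ℂ)) (E : ℂ → ℂ) (K : ℂ → H) : Prop where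
  apply_eq : ∀ w z : ℂ, z ≠ conj w → ev (K w) z = deBrangesKernel E w z
  inner_eq : ∀ (F : H) (w : ℂ), ⟪K w, F⟫_ℂ = ev F w

/-- `norm_conj_le` says `|Θ (z k)| ≤ δ`. Imaginary parts decaying as in `im_succ_lt` make the
normalized kernels at `z k` almost orthogonal, `|⟨e j, e k⟩| ≤ 2⁻¹ ^ (j + 1) * 2⁻¹ ^ (k + 1)`. -/
structure IsSparseKernelSeq (E : ℂ → ℂ) (δ : ℝ) (z : ℕ → ℂ) : Prop where
  im_pos : ∀ k, 0 < (z k).im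
  norm_conj_le : ∀ k, ‖E (conj (z k))‖ ≤ δ * ‖E (z k)‖
  im_zero_lt : (z 0).im < 2⁻¹
  im_succ_lt : ∀ k, (z (k + 1)).im < (1 - δ ^ 2) ^ 2 * 2⁻¹ ^ (4 * k + 10) * (z k).im

theorem norm_le_mul_of_norm_conj_div_le {a b : ℂ} {δ : ℝ} (hb : 0 < ‖b‖)
    (h : ‖conj a / b‖ ≤ δ) : ‖a‖ ≤ δ * ‖b‖ := by
  rwa [norm_div, Complex.norm_conj, div_le_iff₀ hb] at h

theorem norm_add_norm_conj_le {E : ℂ → ℂ} (hHB : ∀ z : ℂ, 0 < z.im → ‖E (conj z)‖ < ‖E z‖)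
    {y : ℝ} (hy : 1 ≤ y) :
    ‖E (y * I)‖ + ‖E (conj (y * I))‖ ≤ y * (4 * (‖E (y * I)‖ / ‖y * I + I‖)) := by
  have hconj := hHB (y * I) (by simp; linarith)
  have hnorm : ‖(y : ℂ) * I + I‖ = y + 1 := by
    rw [show (y : ℂ) * I + I = ((y + 1 : ℝ) : ℂ) * I by push_cast; ring, norm_mul,
      Complex.norm_I, mul_one, Complex.norm_real, Real.norm_of_nonneg (by linarith)]
  rw [hnorm, mul_div_assoc', mul_div_assoc', le_div_iff₀ (by linarith)]
  nlinarith [norm_nonneg (E (y * I))]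

namespace IsDeBrangesKernel

variable {H : Type*} [NormedAddCommGroup H] [InnerProductSpace ℂ H]
  {ev : H →ₗ[ℂ] (ℂ → ℂ)} {E : ℂ → ℂ} {K : ℂ → H}

theorem inner_eq_deBrangesKernel (hK : IsDeBrangesKernel ev E K) {u v : ℂ}
    (h : v.im + u.im ≠ 0) : ⟪K u, K v⟫_ℂ = deBrangesKernel E v u := by
  rw [hK.inner_eq, hK.apply_eq]
  rintro rfl
  simp at h

theorem norm_sq (hK : IsDeBrangesKernel ev E K) {w : ℂ} (hw : 0 < w.im) :
    ‖K w‖ ^ 2 = (‖E w‖ ^ 2 - ‖E (conj w)‖ ^ 2) / (4 * Real.pi * w.im) := by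
  have h := inner_self_eq_norm_sq (𝕜 := ℂ) (K w)
  rw [hK.inner_eq_deBrangesKernel (by linarith), deBrangesKernel_self, RCLike.re_to_complex,
    Complex.ofReal_re] at h
  exact h.symm

theorem ne_zero (hK : IsDeBrangesKernel ev E K) {w : ℂ} (hw : 0 < w.im)
    (hE : ‖E (conj w)‖ < ‖E w‖) : K w ≠ 0 := by
  have hpos : 0 < ‖K w‖ ^ 2 := by
    rw [hK.norm_sq hw]
    have := Real.pi_pos
    exact div_pos (by nlinarith [norm_nonneg (E (conj w))]) (by positivity)
  intro h0
  simp [h0] at hpos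

theorem mul_norm_sq_le_norm_sq (hK : IsDeBrangesKernel ev E K) {w : ℂ} (hw : 0 < w.im)
    {δ : ℝ} (hδ : ‖E (conj w)‖ ≤ δ * ‖E w‖) :
    (1 - δ ^ 2) * ‖E w‖ ^ 2 ≤ 4 * Real.pi * w.im * ‖K w‖ ^ 2 := by
  have hsq : ‖E (conj w)‖ ^ 2 ≤ δ ^ 2 * ‖E w‖ ^ 2 := by
    rw [← mul_pow]
    exact pow_le_pow_left₀ (norm_nonneg _) hδ 2
  rw [hK.norm_sq hw, mul_div_cancel₀ _ (by positivity)]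
  linarith

theorem mul_norm_inner_sq_le (hK : IsDeBrangesKernel ev E K) {u v : ℂ} (hu : 0 < u.im)
    (hv : 0 < v.im) {δ : ℝ} (hδ₀ : 0 ≤ δ) (hδ₁ : δ ≤ 1) (hδu : ‖E (conj u)‖ ≤ δ * ‖E u‖)
    (hδv : ‖E (conj v)‖ ≤ δ * ‖E v‖) :
    (1 - δ ^ 2) ^ 2 * u.im * ‖⟪K u, K v⟫_ℂ‖ ^ 2 ≤ 16 * v.im * (‖K u‖ * ‖K v‖) ^ 2 := by
  have hX : Real.pi * u.im * ‖⟪K u, K v⟫_ℂ‖ ≤ ‖E u‖ * ‖E v‖ := by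
    have h := norm_deBrangesKernel_le E (w := v) (z := u) (by linarith)
    rw [abs_of_pos (by linarith), add_comm v.im,
      ← hK.inner_eq_deBrangesKernel (by linarith)] at h
    have : ‖E (conj u)‖ * ‖E (conj v)‖ ≤ ‖E u‖ * ‖E v‖ :=
      mul_le_mul (hδu.trans (mul_le_of_le_one_left (norm_nonneg _) hδ₁))
        (hδv.trans (mul_le_of_le_one_left (norm_nonneg _) hδ₁)) (norm_nonneg _) (norm_nonneg _)
    have : 0 ≤ Real.pi * v.im * ‖⟪K u, K v⟫_ℂ‖ := by positivity
    linarith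
  have hη : 0 ≤ 1 - δ ^ 2 := by nlinarith
  have hLu := hK.mul_norm_sq_le_norm_sq hu hδu
  have hLv := hK.mul_norm_sq_le_norm_sq hv hδv
  have key : (Real.pi ^ 2 * u.im) * ((1 - δ ^ 2) ^ 2 * u.im * ‖⟪K u, K v⟫_ℂ‖ ^ 2) ≤
      (Real.pi ^ 2 * u.im) * (16 * v.im * (‖K u‖ * ‖K v‖) ^ 2) :=
    calc _ = (1 - δ ^ 2) ^ 2 * (Real.pi * u.im * ‖⟪K u, K v⟫_ℂ‖) ^ 2 := by ring
      _ ≤ (1 - δ ^ 2) ^ 2 * (‖E u‖ * ‖E v‖) ^ 2 := by gcongr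
      _ = ((1 - δ ^ 2) * ‖E u‖ ^ 2) * ((1 - δ ^ 2) * ‖E v‖ ^ 2) := by ring
      _ ≤ (4 * Real.pi * u.im * ‖K u‖ ^ 2) * (4 * Real.pi * v.im * ‖K v‖ ^ 2) := by gcongr
      _ = _ := by ring
  exact le_of_mul_le_mul_left key (by have := Real.pi_pos; positivity)

theorem mul_norm_apply_le (hK : IsDeBrangesKernel ev E K) {u v : ℂ} (hu : 0 < u.im)
    (huv : 2 * u.im ≤ |v.im|) (hE : ‖E (conj u)‖ ≤ ‖E u‖) :
    Real.pi * |v.im| * ‖ev (K u) v‖ ≤ (‖E v‖ + ‖E (conj v)‖) * ‖E u‖ := by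
  have hsum : |v.im| ≤ 2 * |u.im + v.im| := by
    cases abs_cases v.im <;> cases abs_cases (u.im + v.im) <;> linarith
  have hne : u.im + v.im ≠ 0 := by
    intro h
    rw [h, abs_zero] at hsum
    linarith [abs_nonneg v.im]
  have h := norm_deBrangesKernel_le E hne
  rw [← hK.apply_eq u v (fun h' => hne (by rw [h', Complex.conj_im]; ring))] at h
  have hE' := mul_le_mul_of_nonneg_left hE (norm_nonneg (E (conj v)))
  have hπ : 0 ≤ Real.pi * ‖ev (K u) v‖ := by positivity
  have := mul_le_mul_of_nonneg_right hsum hπ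
  linarith

theorem mul_norm_inner_normalized_sq_le (hK : IsDeBrangesKernel ev E K) {u v : ℂ}
    (hu : 0 < u.im) (hv : 0 < v.im) {δ : ℝ} (hδ₀ : 0 ≤ δ) (hδ₁ : δ ≤ 1)
    (hδu : ‖E (conj u)‖ ≤ δ * ‖E u‖) (hδv : ‖E (conj v)‖ ≤ δ * ‖E v‖) :
    (1 - δ ^ 2) ^ 2 * u.im * ‖⟪(‖K u‖⁻¹ : ℂ) • K u, (‖K v‖⁻¹ : ℂ) • K v⟫_ℂ‖ ^ 2 ≤
      16 * v.im := by
  have hnorm : ‖⟪(‖K u‖⁻¹ : ℂ) • K u, (‖K v‖⁻¹ : ℂ) • K v⟫_ℂ‖ =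
      ‖⟪K u, K v⟫_ℂ‖ / (‖K u‖ * ‖K v‖) := by
    simp only [inner_smul_left, inner_smul_right, norm_mul, Complex.norm_conj, norm_inv,
      Complex.norm_real, Real.norm_eq_abs, abs_norm]
    field_simp
  rw [hnorm]
  exact mul_div_sq_le (by linarith) (hK.mul_norm_inner_sq_le hu hv hδ₀ hδ₁ hδu hδv)

theorem mul_norm_apply_normalized_sq_le (hK : IsDeBrangesKernel ev E K) {u v : ℂ}
    (hu : 0 < u.im) (huv : 2 * u.im ≤ |v.im|) {δ : ℝ} (hδ₀ : 0 ≤ δ) (hδ₁ : δ ≤ 1)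
    (hδu : ‖E (conj u)‖ ≤ δ * ‖E u‖) {μ : ℝ} (hμ : ‖E v‖ + ‖E (conj v)‖ ≤ |v.im| * μ) :
    (1 - δ ^ 2) * Real.pi * ‖ev ((‖K u‖⁻¹ : ℂ) • K u) v‖ ^ 2 ≤ 4 * u.im * μ ^ 2 := by
  have hv : 0 < |v.im| := by linarith
  have hμ₀ : 0 ≤ μ :=
    nonneg_of_mul_nonneg_right ((by positivity : (0 : ℝ) ≤ ‖E v‖ + ‖E (conj v)‖).trans hμ) hv
  have hX : Real.pi * ‖ev (K u) v‖ ≤ μ * ‖E u‖ := by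
    have h := hK.mul_norm_apply_le hu huv
      (hδu.trans (mul_le_of_le_one_left (norm_nonneg _) hδ₁))
    refine le_of_mul_le_mul_left ?_ hv
    nlinarith [mul_le_mul_of_nonneg_right hμ (norm_nonneg (E u))]
  have hη : 0 ≤ 1 - δ ^ 2 := by nlinarith
  have hL := hK.mul_norm_sq_le_norm_sq hu hδu
  have hnorm : ‖ev ((‖K u‖⁻¹ : ℂ) • K u) v‖ = ‖ev (K u) v‖ / ‖K u‖ := by
    simp only [map_smul, Pi.smul_apply, smul_eq_mul, norm_mul, norm_inv, Complex.norm_real,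
      Real.norm_eq_abs, abs_norm]
    field_simp
  rw [hnorm]
  refine mul_div_sq_le (by positivity) (le_of_mul_le_mul_left ?_ Real.pi_pos)
  calc Real.pi * ((1 - δ ^ 2) * Real.pi * ‖ev (K u) v‖ ^ 2)
      = (1 - δ ^ 2) * (Real.pi * ‖ev (K u) v‖) ^ 2 := by ring
    _ ≤ (1 - δ ^ 2) * (μ * ‖E u‖) ^ 2 := by gcongr
    _ = μ ^ 2 * ((1 - δ ^ 2) * ‖E u‖ ^ 2) := by ring
    _ ≤ μ ^ 2 * (4 * Real.pi * u.im * ‖K u‖ ^ 2) := by gcongr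
    _ = Real.pi * (4 * u.im * μ ^ 2 * ‖K u‖ ^ 2) := by ring

variable {δ : ℝ} {z : ℕ → ℂ}

theorem norm_inner_normalized_le (hK : IsDeBrangesKernel ev E K)
    (hz : IsSparseKernelSeq E δ z) (hδ₀ : 0 ≤ δ) (hδ₁ : δ < 1) {j k : ℕ} (hjk : j < k) :
    ‖⟪(‖K (z j)‖⁻¹ : ℂ) • K (z j), (‖K (z k)‖⁻¹ : ℂ) • K (z k)⟫_ℂ‖ ≤
      2⁻¹ ^ (j + 1) * 2⁻¹ ^ (k + 1) := by
  have hη : 0 < 1 - δ ^ 2 := by nlinarith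
  have hgram := hK.mul_norm_inner_normalized_sq_le (hz.im_pos j) (hz.im_pos k) hδ₀ hδ₁.le
    (hz.norm_conj_le j) (hz.norm_conj_le k)
  have hdecay := mul_le_sq_mul_of_lt_mul (a := fun k => (z k).im) (fun k => (hz.im_pos k).le)
    (by nlinarith) hz.im_succ_lt hjk
  refine le_of_pow_le_pow_left₀ two_ne_zero (by positivity) (le_of_mul_le_mul_left ?_
    (by have := hz.im_pos j; positivity : 0 < (1 - δ ^ 2) ^ 2 * (z j).im))
  nlinarith

theorem half_mul_sum_norm_sq_le (hK : IsDeBrangesKernel ev E K)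
    (hHB : ∀ z : ℂ, 0 < z.im → ‖E (conj z)‖ < ‖E z‖) (hz : IsSparseKernelSeq E δ z)
    (hδ₀ : 0 ≤ δ) (hδ₁ : δ < 1) (s : Finset ℕ) (c : ℕ → ℂ) :
    2⁻¹ * ∑ k ∈ s, ‖c k‖ ^ 2 ≤ ‖∑ k ∈ s, c k • (‖K (z k)‖⁻¹ : ℂ) • K (z k)‖ ^ 2 := by
  have hunit : ∀ k, ‖(‖K (z k)‖⁻¹ : ℂ) • K (z k)‖ = 1 := fun k =>
    norm_smul_inv_norm (hK.ne_zero (hz.im_pos k) (hHB _ (hz.im_pos k)))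
  have hgram : ∀ j k, j ≠ k →
      ‖⟪(‖K (z j)‖⁻¹ : ℂ) • K (z j), (‖K (z k)‖⁻¹ : ℂ) • K (z k)⟫_ℂ‖ ≤
        2⁻¹ ^ (j + 1) * 2⁻¹ ^ (k + 1) := by
    intro j k hjk
    rcases hjk.lt_or_gt with hlt | hgt
    · exact hK.norm_inner_normalized_le hz hδ₀ hδ₁ hlt
    · rw [norm_inner_symm, mul_comm]
      exact hK.norm_inner_normalized_le hz hδ₀ hδ₁ hgt
  have hsum : ∀ s : Finset ℕ, ∑ k ∈ s, ((2 : ℝ)⁻¹ ^ (k + 1)) ^ 2 ≤ 2⁻¹ := fun s =>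
    calc ∑ k ∈ s, ((2 : ℝ)⁻¹ ^ (k + 1)) ^ 2 ≤ ∑ k ∈ s, 4⁻¹ * 2⁻¹ ^ k :=
          Finset.sum_le_sum fun k _ => by
            rw [← pow_mul, show (4 : ℝ)⁻¹ = 2⁻¹ ^ 2 by norm_num, ← pow_add]
            exact pow_le_pow_of_le_one (by norm_num) (by norm_num) (by omega)
      _ ≤ 4⁻¹ * (1 - 2⁻¹)⁻¹ := by
          rw [← Finset.mul_sum]
          gcongr
          exact sum_pow_le_of_lt_one (by norm_num) (by norm_num) s
      _ = 2⁻¹ := by norm_num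
  convert mul_sum_norm_sq_le_norm_sum_smul_sq hunit hgram hsum s c using 2
  norm_num

theorem mul_sum_norm_apply_normalized_sq_le (hK : IsDeBrangesKernel ev E K)
    (hz : IsSparseKernelSeq E δ z) (hδ₀ : 0 ≤ δ) (hδ₁ : δ ≤ 1) {v : ℂ} (hv : 1 ≤ |v.im|)
    {μ : ℝ} (hμ : ‖E v‖ + ‖E (conj v)‖ ≤ |v.im| * μ) (s : Finset ℕ) :
    (1 - δ ^ 2) * Real.pi * ∑ k ∈ s, ‖ev ((‖K (z k)‖⁻¹ : ℂ) • K (z k)) v‖ ^ 2 ≤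
      4 * μ ^ 2 := by
  have hdecay : ∀ k, (z k).im ≤ 2⁻¹ ^ k * (z 0).im :=
    le_half_pow_mul_of_lt_mul (a := fun k => (z k).im) (fun k => (hz.im_pos k).le)
      (pow_le_one₀ (by nlinarith) (by nlinarith)) hz.im_succ_lt
  have hterm : ∀ k, (1 - δ ^ 2) * Real.pi * ‖ev ((‖K (z k)‖⁻¹ : ℂ) • K (z k)) v‖ ^ 2 ≤
      4 * μ ^ 2 * (2⁻¹ ^ k * (z 0).im) := fun k =>
    calc _ ≤ 4 * (z k).im * μ ^ 2 := by
          refine hK.mul_norm_apply_normalized_sq_le (hz.im_pos k) ?_ hδ₀ hδ₁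
            (hz.norm_conj_le k) hμ
          have := (hdecay k).trans (mul_le_of_le_one_left (hz.im_pos 0).le
            (pow_le_one₀ (by norm_num) (by norm_num)))
          linarith [hz.im_zero_lt]
      _ ≤ 4 * μ ^ 2 * (2⁻¹ ^ k * (z 0).im) := by nlinarith [hdecay k]
  calc (1 - δ ^ 2) * Real.pi * ∑ k ∈ s, ‖ev ((‖K (z k)‖⁻¹ : ℂ) • K (z k)) v‖ ^ 2
      ≤ ∑ k ∈ s, 4 * μ ^ 2 * (2⁻¹ ^ k * (z 0).im) := by
        rw [Finset.mul_sum]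
        exact Finset.sum_le_sum fun k _ => hterm k
    _ = 4 * μ ^ 2 * ((∑ k ∈ s, 2⁻¹ ^ k) * (z 0).im) := by
        rw [← Finset.mul_sum, ← Finset.sum_mul]
    _ ≤ 4 * μ ^ 2 * ((1 - 2⁻¹)⁻¹ * 2⁻¹) :=
        mul_le_mul_of_nonneg_left (mul_le_mul (sum_pow_le_of_lt_one (by norm_num) (by norm_num) s)
          hz.im_zero_lt.le (hz.im_pos 0).le (by norm_num)) (by positivity)
    _ = 4 * μ ^ 2 := by norm_num

theorem norm_apply_le_of_mem_closure_span (hK : IsDeBrangesKernel ev E K)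
    (hHB : ∀ z : ℂ, 0 < z.im → ‖E (conj z)‖ < ‖E z‖) (hz : IsSparseKernelSeq E δ z)
    (hδ₀ : 0 ≤ δ) (hδ₁ : δ < 1) {v : ℂ} (hv : 1 ≤ |v.im|) {μ : ℝ}
    (hμ : ‖E v‖ + ‖E (conj v)‖ ≤ |v.im| * μ) {F : H}
    (hF : F ∈ (Submodule.span ℂ
      (Set.range fun k => (‖K (z k)‖⁻¹ : ℂ) • K (z k))).topologicalClosure) :
    ‖ev F v‖ ≤ √(8 / ((1 - δ ^ 2) * Real.pi)) * μ * ‖F‖ := by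
  have hη : 0 < (1 - δ ^ 2) * Real.pi := mul_pos (by nlinarith) Real.pi_pos
  have hμ₀ : 0 ≤ μ := nonneg_of_mul_nonneg_right
    ((by positivity : (0 : ℝ) ≤ ‖E v‖ + ‖E (conj v)‖).trans hμ) (by linarith)
  have h := mul_norm_apply_sq_le_of_mem_topologicalClosure_span
    (hK.half_mul_sum_norm_sq_le hHB hz hδ₀ hδ₁) (innerSL ℂ (K v))
    (B := 4 * μ ^ 2 / ((1 - δ ^ 2) * Real.pi)) (fun s => by
      simp only [innerSL_apply_apply, hK.inner_eq]
      rw [le_div_iff₀ hη, mul_comm]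
      exact hK.mul_sum_norm_apply_normalized_sq_le hz hδ₀ hδ₁.le hv hμ s) hF
  rw [innerSL_apply_apply, hK.inner_eq] at h
  refine le_of_pow_le_pow_left₀ two_ne_zero (by positivity) ?_
  rw [mul_pow, mul_pow, Real.sq_sqrt (by positivity)]
  calc ‖ev F v‖ ^ 2 = 2 * (2⁻¹ * ‖ev F v‖ ^ 2) := by ring
    _ ≤ 2 * (4 * μ ^ 2 / ((1 - δ ^ 2) * Real.pi) * ‖F‖ ^ 2) := by gcongr
    _ = 8 / ((1 - δ ^ 2) * Real.pi) * μ ^ 2 * ‖F‖ ^ 2 := by ring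

theorem norm_apply_le_on_imaginary_axis (hK : IsDeBrangesKernel ev E K)
    (hHB : ∀ z : ℂ, 0 < z.im → ‖E (conj z)‖ < ‖E z‖) (hz : IsSparseKernelSeq E δ z)
    (hδ₀ : 0 ≤ δ) (hδ₁ : δ < 1) {F : H}
    (hF : F ∈ (Submodule.span ℂ
      (Set.range fun k => (‖K (z k)‖⁻¹ : ℂ) • K (z k))).topologicalClosure)
    {y : ℝ} (hy : 1 ≤ y) :
    ‖ev F (y * I)‖ ≤
        4 * √(8 / ((1 - δ ^ 2) * Real.pi)) * ‖F‖ * (‖E (y * I)‖ / ‖y * I + I‖) ∧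
      ‖conj (ev F (conj (y * I)))‖ ≤
        4 * √(8 / ((1 - δ ^ 2) * Real.pi)) * ‖F‖ * (‖E (y * I)‖ / ‖y * I + I‖) := by
  have hμ := norm_add_norm_conj_le hHB hy
  set μ := 4 * (‖E (y * I)‖ / ‖y * I + I‖)
  have him : |((y : ℂ) * I).im| = y := by simp; linarith
  have him' : |(conj ((y : ℂ) * I)).im| = y := by simp; linarith
  constructor
  · refine (hK.norm_apply_le_of_mem_closure_span hHB hz hδ₀ hδ₁ (by linarith) (μ := μ) ?_
      hF).trans_eq (by ring)
    rwa [him]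
  · rw [Complex.norm_conj]
    refine (hK.norm_apply_le_of_mem_closure_span hHB hz hδ₀ hδ₁ (by linarith) (μ := μ) ?_
      hF).trans_eq (by ring)
    rwa [him', conj_conj, add_comm]

end IsDeBrangesKernel

theorem mnorm_le_max {H : Type*} [NormedAddCommGroup H] [InnerProductSpace ℂ H]
    {ev : H →ₗ[ℂ] (ℂ → ℂ)} {D : Set ℂ} {m : ℂ → ℝ} {F : H} {C : ℝ} (hC : 0 ≤ C)
    (h : ∀ z ∈ D, ‖ev F z‖ ≤ C * m z ∧ ‖conj (ev F (conj z))‖ ≤ C * m z) :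
    mnorm ev D m F ≤ max ‖F‖ C :=
  max_le_max le_rfl (csInf_le ⟨0, fun _ hx => hx.1⟩ ⟨hC, h⟩)

theorem rm_contains_infinite_dimensional_closed_subspace_general
    {H : Type*} [NormedAddCommGroup H] [InnerProductSpace ℂ H]
    (ev : H →ₗ[ℂ] (ℂ → ℂ))
    (E : ℂ → ℂ)
    (hHB : ∀ z : ℂ, 0 < z.im → ‖E ((starRingEnd ℂ) z)‖ < ‖E z‖)
    (K : ℂ → H)
    (hKform : ∀ w z : ℂ, z ≠ (starRingEnd ℂ) w →
      ev (K w) z = (E z * (starRingEnd ℂ) (E w) -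
          (starRingEnd ℂ) (E ((starRingEnd ℂ) z)) * E ((starRingEnd ℂ) w)) /
        (2 * (Real.pi : ℂ) * Complex.I * ((starRingEnd ℂ) w - z)))
    (hrepro : ∀ (F : H) (w : ℂ), ⟪K w, F⟫_ℂ = ev F w)
    (Θ : ℂ → ℂ)
    (hΘ : ∀ z : ℂ, Θ z = (starRingEnd ℂ) (E ((starRingEnd ℂ) z)) / E z)
    (D : Set ℂ) (hD : D = {z : ℂ | ∃ y : ℝ, 1 ≤ y ∧ z = (y : ℂ) * Complex.I})
    (m : ℂ → ℝ) (hm : ∀ z : ℂ, m z = ‖E z‖ / ‖z + Complex.I‖)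
    (w : ℕ → ℂ) (hw : ∀ k, 0 < (w k).im)
    (hliminf : ∀ ε : ℝ, 0 < ε → ∀ N : ℕ, ∃ k ≥ N, (w k).im < ε)
    (hΘlt : ∃ δ : ℝ, δ < 1 ∧ ∀ k, ‖Θ (w k)‖ ≤ δ) :
    ∃ M : Submodule ℂ H, ¬ FiniteDimensional ℂ M ∧ IsClosed (M : Set H) ∧
      (M : Set H) ⊆ RmSet ev D m ∧
      ∃ C : ℝ, 0 < C ∧ ∀ F ∈ M, mnorm ev D m F ≤ C * ‖F‖ := by
  obtain ⟨δ, hδ₁, hΘδ⟩ := hΘlt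
  have hδ₀ : 0 ≤ δ := (norm_nonneg _).trans (hΘδ 0)
  have hη : 0 < 1 - δ ^ 2 := by nlinarith
  have hK : IsDeBrangesKernel ev E K := ⟨hKform, hrepro⟩
  obtain ⟨φ, hφ₀, hφ⟩ := exists_seq_lt_mul hw (fun ε hε => (hliminf ε hε 0).imp fun _ h => h.2)
    (by norm_num : (0 : ℝ) < 2⁻¹) (ρ := fun k => (1 - δ ^ 2) ^ 2 * 2⁻¹ ^ (4 * k + 10))
    (fun k => by positivity)
  have hz : IsSparseKernelSeq E δ (fun k => w (φ k)) :=
    ⟨fun k => hw _, fun k => norm_le_mul_of_norm_conj_div_le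
      ((norm_nonneg _).trans_lt (hHB _ (hw _))) (hΘ _ ▸ hΘδ _), hφ₀, hφ⟩
  set C := 4 * √(8 / ((1 - δ ^ 2) * Real.pi))
  set M := (Submodule.span ℂ
    (Set.range fun k => (‖K (w (φ k))‖⁻¹ : ℂ) • K (w (φ k)))).topologicalClosure
  have hbound : ∀ F ∈ M, ∀ z ∈ D,
      ‖ev F z‖ ≤ C * ‖F‖ * m z ∧ ‖conj (ev F (conj z))‖ ≤ C * ‖F‖ * m z := by
    subst hD
    rintro F hF _ ⟨y, hy, rfl⟩
    rw [hm]
    exact hK.norm_apply_le_on_imaginary_axis hHB hz hδ₀ hδ₁ hF hy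
  refine ⟨M, not_finiteDimensional_of_linearIndependent
      (linearIndependent_of_mul_sum_norm_sq_le (by norm_num)
        (hK.half_mul_sum_norm_sq_le hHB hz hδ₀ hδ₁))
      fun k => Submodule.le_topologicalClosure _ (Submodule.subset_span ⟨k, rfl⟩),
    Submodule.isClosed_topologicalClosure _, fun F hF => ⟨C * ‖F‖, by positivity, hbound F hF⟩,
    max 1 C, by positivity, fun F hF => ?_⟩
  calc mnorm ev D m F ≤ max ‖F‖ (C * ‖F‖) := mnorm_le_max (by positivity) (hbound F hF)
    _ = max 1 C * ‖F‖ := by rw [max_mul_of_nonneg _ _ (norm_nonneg F), one_mul]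

/-- **Statement 13.** If there is a sequence `(w_k)` in `ℂ⁺` with `liminf Im w_k = 0`
and `sup_k |Θ(w_k)| < 1`, then `R_m(H)` (for `m = m_E|_{i[1,∞)}`) contains an
infinite-dimensional `‖·‖_H`-closed subspace `M`; in particular `‖·‖_m` and `‖·‖_H`
are equivalent on `M`. -/
theorem rm_contains_infinite_dimensional_closed_subspace
    {H : Type*} [NormedAddCommGroup H] [InnerProductSpace ℂ H] [CompleteSpace H]
    (ev : H →ₗ[ℂ] (ℂ → ℂ)) (hinj : Function.Injective ev)
    (hentire : ∀ F : H, Differentiable ℂ (ev F))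
    (E : ℂ → ℂ) (hE : Differentiable ℂ E)
    (hHB : ∀ z : ℂ, 0 < z.im → ‖E ((starRingEnd ℂ) z)‖ < ‖E z‖)
    (K : ℂ → H)
    (hKform : ∀ w z : ℂ, z ≠ (starRingEnd ℂ) w →
      ev (K w) z = (E z * (starRingEnd ℂ) (E w) -
          (starRingEnd ℂ) (E ((starRingEnd ℂ) z)) * E ((starRingEnd ℂ) w)) /
        (2 * (Real.pi : ℂ) * Complex.I * ((starRingEnd ℂ) w - z)))
    (hrepro : ∀ (F : H) (w : ℂ), ⟪K w, F⟫_ℂ = ev F w)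
    (hinf : ¬ FiniteDimensional ℂ H)
    (hnz : ∀ x : ℝ, ∃ F : H, ev F (x : ℂ) ≠ 0)
    (Θ : ℂ → ℂ)
    (hΘ : ∀ z : ℂ, Θ z = (starRingEnd ℂ) (E ((starRingEnd ℂ) z)) / E z)
    (D : Set ℂ) (hD : D = {z : ℂ | ∃ y : ℝ, 1 ≤ y ∧ z = (y : ℂ) * Complex.I})
    (m : ℂ → ℝ) (hm : ∀ z : ℂ, m z = ‖E z‖ / ‖z + Complex.I‖)
    (w : ℕ → ℂ) (hw : ∀ k, 0 < (w k).im)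
    (hliminf : ∀ ε : ℝ, 0 < ε → ∀ N : ℕ, ∃ k ≥ N, (w k).im < ε)
    (hΘlt : ∃ δ : ℝ, δ < 1 ∧ ∀ k, ‖Θ (w k)‖ ≤ δ) :
    ∃ M : Submodule ℂ H, ¬ FiniteDimensional ℂ M ∧ IsClosed (M : Set H) ∧
      (M : Set H) ⊆ RmSet ev D m ∧
      ∃ C : ℝ, 0 < C ∧ ∀ F ∈ M, mnorm ev D m F ≤ C * ‖F‖ :=
  rm_contains_infinite_dimensional_closed_subspace_general ev E hHB K hKform hrepro Θ hΘ D hD m hm w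
    hw hliminf hΘlt
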